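/- Let Φ₁, Φ₂ be real n×n matrices, P a real symmetric positive definite n×n matrix, and a₁, a₂, a, r real numbers with a₁ ≥ 1, 0 < a₂ ≤ 1, 0 ≤ r ≤ 1, a > 1, a₁^r · a₂^{1−r} ≥ a (real powers), and suppose a_i⁻²·P − ΦᵢᵀPΦᵢ is positive semidefinite for i = 1, 2. Then there exists a constant C > 0, depending only on P, such that for every switching signal s : ℕ → {1, 2} with #{j < k : s(j) = 1} ≥ r·k for all k, and every trajectory x : ℕ → ℝⁿ with x(k+1) = Φ_{s(k)}x(k), one has ‖x(k)‖ ≤ C · a^{−k} · ‖x(0)‖ for all k ∈ ℕ. In particular the switched system is exponentially stable with decay rate at least a. -/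

import Mathlib

/-!
With `S = √P`, the Lyapunov function `xᵀPx` equals `‖Sx‖²`, and the matrix inequality for mode `i`
says `aᵢ ‖SΦᵢx‖ ≤ ‖Sx‖`. Along a trajectory `‖S x k‖` thus shrinks by the factor
`∏_{j<k} a_{s j} = a₁^N a₂^(k-N)`, where `N ≥ r k` counts transmissions; as `a₁ ≥ 1 ≥ a₂`, this is
at least `(a₁^r a₂^(1-r))^k ≥ a^k`. Since `S` is invertible, `‖x‖ ≤ ‖S⁻¹‖ ‖Sx‖` and
`‖Sx‖ ≤ ‖S‖ ‖x‖`, which gives the constant `‖S⁻¹‖ ‖S‖` (plus one, to make it positive).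
-/

open Matrix Finset
open scoped MatrixOrder

theorem Finset.prod_comp_fin_two {α M : Type*} [CommMonoid M] (t : Finset α) (s : α → Fin 2)
    (f : Fin 2 → M) :
    ∏ j ∈ t, f (s j) = f 0 ^ #{j ∈ t | s j = 0} * f 1 ^ #{j ∈ t | s j = 1} := by
  rw [← prod_fiberwise t s, Fin.prod_univ_two]
  congr 1 <;> exact prod_eq_pow_card fun j hj => by rw [(mem_filter.mp hj).2]

theorem Finset.card_filter_fin_two {α : Type*} (t : Finset α) (s : α → Fin 2) :
    #{j ∈ t | s j = 0} + #{j ∈ t | s j = 1} = #t := by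
  rw [← card_filter_add_card_filter_not (s := t) (p := fun j => s j = 0)]
  congr 2
  exact filter_congr fun j _ => by fin_omega

theorem pow_le_pow_mul_pow_of_le_rpow_mul_rpow {a₀ a₁ A r : ℝ} (ha₀ : 1 ≤ a₀) (ha₁pos : 0 < a₁)
    (ha₁ : a₁ ≤ 1) (hA : 0 ≤ A) (hrate : A ≤ a₀ ^ r * a₁ ^ (1 - r)) {N M : ℕ}
    (hN : r * (N + M : ℕ) ≤ N) : A ^ (N + M) ≤ a₀ ^ N * a₁ ^ M := by
  have hM : (M : ℝ) ≤ (1 - r) * (N + M : ℕ) := by push_cast at hN ⊢; linarith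
  calc A ^ (N + M) ≤ (a₀ ^ r * a₁ ^ (1 - r)) ^ (N + M) := pow_le_pow_left₀ hA hrate _
    _ = a₀ ^ (r * (N + M : ℕ)) * a₁ ^ ((1 - r) * (N + M : ℕ)) := by
      rw [mul_pow, ← Real.rpow_natCast, ← Real.rpow_natCast (a₁ ^ (1 - r)),
        ← Real.rpow_mul (by linarith), ← Real.rpow_mul ha₁pos.le]
    _ ≤ a₀ ^ (N : ℝ) * a₁ ^ (M : ℝ) := by
      gcongr ?_ * ?_
      · exact Real.rpow_le_rpow_of_exponent_le ha₀ hN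
      · exact Real.rpow_le_rpow_of_exponent_ge ha₁pos ha₁ hM
    _ = a₀ ^ N * a₁ ^ M := by rw [Real.rpow_natCast, Real.rpow_natCast]

theorem pow_le_prod_of_frequency_le {a : Fin 2 → ℝ} {A r : ℝ} (ha₀ : 1 ≤ a 0) (ha₁pos : 0 < a 1)
    (ha₁ : a 1 ≤ 1) (hA : 0 ≤ A) (hrate : A ≤ a 0 ^ r * a 1 ^ (1 - r)) {s : ℕ → Fin 2} {k : ℕ}
    (hs : r * k ≤ #{j ∈ range k | s j = 0}) :
    A ^ k ≤ ∏ j ∈ range k, a (s j) := by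
  have hcard := (range k).card_filter_fin_two s
  rw [card_range] at hcard
  have key := pow_le_pow_mul_pow_of_le_rpow_mul_rpow ha₀ ha₁pos ha₁ hA hrate (by rwa [hcard])
  rwa [hcard, ← prod_comp_fin_two] at key

theorem prod_range_mul_le_of_mul_succ_le {R : Type*} [CommSemiring R] [PartialOrder R]
    [IsOrderedRing R] {c u : ℕ → R} (hc : ∀ m, 0 ≤ c m) (h : ∀ m, c m * u (m + 1) ≤ u m) :
    ∀ k, (∏ j ∈ range k, c j) * u k ≤ u 0
  | 0 => by simp
  | k + 1 => calc
      (∏ j ∈ range (k + 1), c j) * u (k + 1)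
          = (∏ j ∈ range k, c j) * (c k * u (k + 1)) := by
        rw [prod_range_succ, mul_assoc]
      _ ≤ (∏ j ∈ range k, c j) * u k :=
        mul_le_mul_of_nonneg_left (h k) (prod_nonneg fun j _ => hc j)
      _ ≤ u 0 := prod_range_mul_le_of_mul_succ_le hc h k

theorem ContinuousLinearMap.norm_le_norm_inverse_mul_norm_apply {𝕜 E : Type*}
    [NontriviallyNormedField 𝕜] [NormedAddCommGroup E] [NormedSpace 𝕜 E] {T : E →L[𝕜] E}
    (hT : IsUnit T) (x : E) : ‖x‖ ≤ ‖Ring.inverse T‖ * ‖T x‖ := by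
  calc ‖x‖ = ‖Ring.inverse T (T x)‖ := by
        rw [← mul_apply_eq_comp, Ring.inverse_mul_cancel T hT, one_apply_eq_self]
    _ ≤ _ := le_opNorm _ _

section

variable {ι : Type*} [Fintype ι]

theorem Matrix.PosSemidef.dotProduct_mulVec_mulVec_le {P Φ : Matrix ι ι ℝ} {c : ℝ}
    (h : (c • P - Φᵀ * P * Φ).PosSemidef) (v : ι → ℝ) :
    (Φ *ᵥ v) ⬝ᵥ P *ᵥ (Φ *ᵥ v) ≤ c * (v ⬝ᵥ P *ᵥ v) := by
  have := h.dotProduct_mulVec_nonneg v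
  rw [star_trivial, sub_mulVec, dotProduct_sub, smul_mulVec, dotProduct_smul, smul_eq_mul,
    ← mulVec_mulVec, ← mulVec_mulVec, dotProduct_mulVec v Φᵀ, vecMul_transpose] at this
  linarith

variable [DecidableEq ι]

theorem Matrix.PosSemidef.norm_toEuclideanCLM_sqrt_sq {P : Matrix ι ι ℝ} (hP : P.PosSemidef)
    (x : EuclideanSpace ℝ ι) : ‖toEuclideanCLM (𝕜 := ℝ) (CFC.sqrt P) x‖ ^ 2 = x ⬝ᵥ P *ᵥ x := by
  have hT : IsSelfAdjoint (toEuclideanCLM (𝕜 := ℝ) (CFC.sqrt P)) :=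
    (CFC.sqrt_nonneg P).isSelfAdjoint.map _
  rw [← real_inner_self_eq_norm_sq, ← ContinuousLinearMap.adjoint_inner_right, hT.adjoint_eq,
    ← mul_apply_eq_comp, ← map_mul, CFC.sqrt_mul_sqrt_self P hP.nonneg, inner_toEuclideanCLM]

theorem Matrix.PosSemidef.mul_norm_toEuclideanCLM_sqrt_le {P Φ : Matrix ι ι ℝ} (hP : P.PosSemidef)
    {a : ℝ} (ha : 0 < a) (hΦ : ((a ^ 2)⁻¹ • P - Φᵀ * P * Φ).PosSemidef) (x : EuclideanSpace ℝ ι) :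
    a * ‖toEuclideanCLM (𝕜 := ℝ) (CFC.sqrt P) (toEuclideanCLM (𝕜 := ℝ) Φ x)‖ ≤
      ‖toEuclideanCLM (𝕜 := ℝ) (CFC.sqrt P) x‖ := by
  have h := hΦ.dotProduct_mulVec_mulVec_le x.ofLp
  rw [← ofLp_toEuclideanCLM, ← hP.norm_toEuclideanCLM_sqrt_sq, ← hP.norm_toEuclideanCLM_sqrt_sq]
    at h
  refine (pow_le_pow_iff_left₀ (by positivity) (norm_nonneg _) two_ne_zero).mp ?_
  calc (a * _) ^ 2 ≤ a ^ 2 * ((a ^ 2)⁻¹ * _) := by rw [mul_pow]; gcongr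
    _ = _ := by field_simp

theorem exists_prod_mul_norm_le_of_common_lyapunov {M : Type*} (Φ : M → Matrix ι ι ℝ)
    {P : Matrix ι ι ℝ} (hP : P.PosDef) {a : M → ℝ} (ha : ∀ i, 0 < a i)
    (hΦ : ∀ i, ((a i ^ 2)⁻¹ • P - (Φ i)ᵀ * P * Φ i).PosSemidef) :
    ∃ C : ℝ, 0 < C ∧ ∀ (s : ℕ → M) (x : ℕ → EuclideanSpace ℝ ι),
      (∀ k, x (k + 1) = (Φ (s k)).mulVec (x k)) →
      ∀ k, (∏ j ∈ range k, a (s j)) * ‖x k‖ ≤ C * ‖x 0‖ := by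
  set T := toEuclideanCLM (𝕜 := ℝ) (CFC.sqrt P)
  have hT : IsUnit T :=
    (CFC.isUnit_sqrt_iff_isStrictlyPositive.mpr hP.isStrictlyPositive).map _
  refine ⟨‖Ring.inverse T‖ * ‖T‖ + 1, by positivity, fun s x hx k => ?_⟩
  have hstep (m : ℕ) : a (s m) * ‖T (x (m + 1))‖ ≤ ‖T (x m)‖ := by
    rw [show x (m + 1) = toEuclideanCLM (𝕜 := ℝ) (Φ (s m)) (x m) from
      WithLp.ofLp_injective 2 (hx m)]
    exact hP.posSemidef.mul_norm_toEuclideanCLM_sqrt_le (ha _) (hΦ _) _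
  have hdecay := prod_range_mul_le_of_mul_succ_le (u := fun m => ‖T (x m)‖)
    (fun m => (ha (s m)).le) hstep k
  have hprod : 0 ≤ ∏ j ∈ range k, a (s j) := prod_nonneg fun j _ => (ha _).le
  calc (∏ j ∈ range k, a (s j)) * ‖x k‖
      ≤ (∏ j ∈ range k, a (s j)) * (‖Ring.inverse T‖ * ‖T (x k)‖) :=
        mul_le_mul_of_nonneg_left (T.norm_le_norm_inverse_mul_norm_apply hT _) hprod
    _ ≤ ‖Ring.inverse T‖ * ‖T (x 0)‖ := by
        rw [mul_left_comm]; exact mul_le_mul_of_nonneg_left hdecay (norm_nonneg _)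
    _ ≤ ‖Ring.inverse T‖ * (‖T‖ * ‖x 0‖) := by gcongr; exact T.le_opNorm _
    _ ≤ (‖Ring.inverse T‖ * ‖T‖ + 1) * ‖x 0‖ := by nlinarith [norm_nonneg (x 0)]

end

theorem ncs_switched_exponential_stability_general
    {n : ℕ} (Φ : Fin 2 → Matrix (Fin n) (Fin n) ℝ)
    (P : Matrix (Fin n) (Fin n) ℝ) (a : Fin 2 → ℝ) (A r : ℝ)
    (hP : P.PosDef)
    (ha₁ : 1 ≤ a 0) (ha₂pos : 0 < a 1) (ha₂ : a 1 ≤ 1)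
    (hA : 1 < A)
    (hrate : A ≤ (a 0) ^ r * (a 1) ^ (1 - r))
    (hpsd : ∀ i : Fin 2, (((a i) ^ 2)⁻¹ • P - (Φ i)ᵀ * P * (Φ i)).PosSemidef) :
    ∃ C : ℝ, 0 < C ∧
      ∀ (s : ℕ → Fin 2),
        (∀ k : ℕ,
          r * k ≤ (((Finset.range k).filter fun j => s j = 0).card : ℝ)) →
        ∀ x : ℕ → EuclideanSpace ℝ (Fin n),
          (∀ k : ℕ, x (k + 1) = (Φ (s k)).mulVec (x k)) →
          ∀ k : ℕ, ‖x k‖ ≤ C * (A ^ k)⁻¹ * ‖x 0‖ := by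
  have ha : ∀ i, 0 < a i := Fin.forall_fin_two.mpr ⟨by linarith, ha₂pos⟩
  obtain ⟨C, hC, hbound⟩ := exists_prod_mul_norm_le_of_common_lyapunov Φ hP ha hpsd
  refine ⟨C, hC, fun s hs x hx k => ?_⟩
  have hAk : A ^ k ≤ ∏ j ∈ range k, a (s j) :=
    pow_le_prod_of_frequency_le ha₁ ha₂pos ha₂ (by linarith) hrate (hs k)
  rw [mul_right_comm, ← div_eq_mul_inv, le_div_iff₀ (by positivity)]
  calc ‖x k‖ * A ^ k ≤ (∏ j ∈ range k, a (s j)) * ‖x k‖ := by rw [mul_comm]; gcongr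
    _ ≤ C * ‖x 0‖ := hbound s x hx k

/-- Exponential stability of the two-mode switched system modeling an NCS with
packet loss: under the BMI conditions `aᵢ⁻² • P - Φᵢᵀ P Φᵢ ⪰ 0` with
`a₁ = a 0 ≥ 1`, `0 < a₂ = a 1 ≤ 1` and `a₁^r a₂^(1-r) ≥ A > 1`, there is a
constant `C > 0` (depending only on `P`) such that every trajectory with the
transmission mode occurring at least a fraction `r` of the time satisfies
`‖x k‖ ≤ C A⁻ᵏ ‖x 0‖` in the Euclidean norm. -/
theorem ncs_switched_exponential_stability
    {n : ℕ} (Φ : Fin 2 → Matrix (Fin n) (Fin n) ℝ)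
    (P : Matrix (Fin n) (Fin n) ℝ) (a : Fin 2 → ℝ) (A r : ℝ)
    (hP : P.PosDef)
    (ha₁ : 1 ≤ a 0) (ha₂pos : 0 < a 1) (ha₂ : a 1 ≤ 1)
    (hr0 : 0 ≤ r) (hr1 : r ≤ 1) (hA : 1 < A)
    (hrate : A ≤ (a 0) ^ r * (a 1) ^ (1 - r))
    (hpsd : ∀ i : Fin 2, (((a i) ^ 2)⁻¹ • P - (Φ i)ᵀ * P * (Φ i)).PosSemidef) :
    ∃ C : ℝ, 0 < C ∧
      ∀ (s : ℕ → Fin 2),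
        (∀ k : ℕ,
          r * k ≤ (((Finset.range k).filter fun j => s j = 0).card : ℝ)) →
        ∀ x : ℕ → EuclideanSpace ℝ (Fin n),
          (∀ k : ℕ, x (k + 1) = (Φ (s k)).mulVec (x k)) →
          ∀ k : ℕ, ‖x k‖ ≤ C * (A ^ k)⁻¹ * ‖x 0‖ :=
  ncs_switched_exponential_stability_general Φ P a A r hP ha₁ ha₂pos ha₂ hA hrate hpsd
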